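/- Fix n ≥ 1 and let Qₙ(x) = x₁²+⋯+xₙ² be the positive-definite quadratic form on ℝⁿ. Let Pinₙ be the subgroup of units of the real Clifford algebra Cl(Qₙ) generated by the images ι(v) of unit vectors, and let Spinₙ ⊂ Pinₙ be the subgroup generated by the products ι(v)·ι(w) of pairs of unit vectors; it contains the central element −1. Let Sp(1) denote the multiplicative group of unit quaternions in ℍ. Then the map Spinₙ × Sp(1) → (Cl(Qₙ) ⊗_ℝ ℍ)ˣ given by (g, λ) ↦ g ⊗ λ is a group homomorphism whose kernel is exactly {(1,1), (−1,−1)}; in particular it induces an injective group homomorphism from the quotient (Spinₙ × Sp(1))/⟨(−1,−1)⟩ into the unit group of Cl(Qₙ) ⊗_ℝ ℍ. -/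

import Mathlib

/-!
Over a field, `a ⊗ b = 1` forces `a` and `b` to be scalars `r⁻¹` and `r`: apply to the equation a
linear functional on one factor taking the value `1` at `1`. A real scalar that is a unit
quaternion is `±1`, so the kernel of `(g, λ) ↦ g ⊗ λ` is `{(1, 1), (-1, -1)}`. Finally
`-1 = ι(e) ι(-e)` for a unit vector `e`, so `-1 ∈ Spinₙ` as soon as `n ≥ 1`.
-/

open scoped TensorProduct Quaternion

noncomputable section

/-- The standard positive definite quadratic form `Qₙ(x) = x₁² + ⋯ + xₙ²` on `ℝⁿ`. -/
def Qeuc (n : ℕ) : QuadraticForm ℝ (Fin n → ℝ) :=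
  QuadraticMap.weightedSumSquares ℝ (fun _ : Fin n => (1 : ℝ))

/-- `Spinₙ`: the subgroup of the unit group of the Clifford algebra `Cl(Qₙ)` generated by the
products `ι v * ι w` of pairs of unit vectors. -/
def SpinG (n : ℕ) : Subgroup (CliffordAlgebra (Qeuc n))ˣ :=
  Subgroup.closure {u | ∃ v w : Fin n → ℝ, Qeuc n v = 1 ∧ Qeuc n w = 1 ∧
    (u : CliffordAlgebra (Qeuc n)) =
      CliffordAlgebra.ι (Qeuc n) v * CliffordAlgebra.ι (Qeuc n) w}

/-- The central subgroup `⟨(−1,−1)⟩` of `Spinₙ × Sp(1)`. -/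
def ZSpin (n : ℕ) : Subgroup (↥(SpinG n) × ↥(unitary ℍ[ℝ])) :=
  Subgroup.closure {p | ((p.1 : (CliffordAlgebra (Qeuc n))ˣ) = -1) ∧ ((p.2 : ℍ[ℝ]) = -1)}

theorem closure_of_central_normal {G : Type*} [Group G] {S : Set G}
    (hS : S ⊆ (Subgroup.center G : Set G)) : (Subgroup.closure S).Normal := by
  constructor
  intro x hx g
  have h := Subgroup.mem_center_iff.mp
    ((Subgroup.closure_le (Subgroup.center G)).mpr hS hx) g
  rw [h, mul_inv_cancel_right]
  exact hx

instance (n : ℕ) : (ZSpin n).Normal := by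
  apply closure_of_central_normal
  rintro ⟨a, b⟩ ⟨ha, hb⟩
  simp only [SetLike.mem_coe, Subgroup.mem_center_iff]
  rintro ⟨c, d⟩
  refine Prod.ext ?_ ?_
  · refine Subtype.ext ?_
    show (c : (CliffordAlgebra (Qeuc n))ˣ) * a = (a : (CliffordAlgebra (Qeuc n))ˣ) * c
    rw [ha, mul_neg_one, neg_one_mul]
  · refine Subtype.ext ?_
    show (d : ℍ[ℝ]) * b = (b : ℍ[ℝ]) * d
    rw [hb, mul_neg_one, neg_one_mul]

namespace Algebra.TensorProduct

theorem dual_smul_eq_of_tmul_eq_one {R A B : Type*} [CommSemiring R] [Semiring A] [Semiring B]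
    [Algebra R A] [Algebra R B] {a : A} {b : B} (h : a ⊗ₜ[R] b = 1) (f : Module.Dual R B) :
    f b • a = f 1 • (1 : A) := by
  rw [one_def] at h
  simpa using congrArg ((_root_.TensorProduct.rid R A).toLinearMap ∘ₗ f.lTensor A) h

theorem exists_eq_algebraMap_of_tmul_eq_one {K A B : Type*} [Field K] [Ring A] [Ring B]
    [Algebra K A] [Algebra K B] [Nontrivial A] [Nontrivial B] {a : A} {b : B}
    (h : a ⊗ₜ[K] b = 1) : ∃ r : K, a = algebraMap K A r⁻¹ ∧ b = algebraMap K B r := by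
  obtain ⟨f, hf⟩ := Module.Projective.exists_dual_eq_one K (one_ne_zero : (1 : B) ≠ 0)
  obtain ⟨g, hg⟩ := Module.Projective.exists_dual_eq_one K (one_ne_zero : (1 : A) ≠ 0)
  have hfa : f b • a = 1 := by simpa [hf] using dual_smul_eq_of_tmul_eq_one h f
  have hgb : g a • b = 1 := by
    simpa [hg] using dual_smul_eq_of_tmul_eq_one (congrArg (Algebra.TensorProduct.comm K A B) h) g
  have hfb : f b ≠ 0 := fun h0 => by simp [h0] at hfa
  have ha : a = algebraMap K A (f b)⁻¹ := by
    rw [Algebra.algebraMap_eq_smul_one, ← hfa, smul_smul, inv_mul_cancel₀ hfb, one_smul]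
  have hga : g a = (f b)⁻¹ := by
    rw [ha, Algebra.algebraMap_eq_smul_one, map_smul, hg, smul_eq_mul, mul_one]
  refine ⟨f b, ha, ?_⟩
  rw [Algebra.algebraMap_eq_smul_one, ← hgb, smul_smul, hga, mul_inv_cancel₀ hfb, one_smul]

def tmulMonoidHom (R A B : Type*) [CommSemiring R] [Semiring A] [Semiring B] [Algebra R A]
    [Algebra R B] : A × B →* A ⊗[R] B where
  toFun p := p.1 ⊗ₜ p.2
  map_one' := rfl
  map_mul' _ _ := (tmul_mul_tmul _ _ _ _).symm

end Algebra.TensorProduct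

theorem Quaternion.coe_mem_unitary_iff {R : Type*} [CommRing R] [NoZeroDivisors R] {r : R} :
    (r : ℍ[R]) ∈ unitary ℍ[R] ↔ r = 1 ∨ r = -1 := by
  rw [Unitary.mem_iff, star_coe, and_self, ← coe_mul, ← coe_one, coe_inj, mul_self_eq_one_iff]

theorem tmul_eq_one_iff_of_mem_unitary {K A : Type*} [Field K] [Ring A] [Algebra K A]
    [Nontrivial A] {a : A} {q : ℍ[K]} (hq : q ∈ unitary ℍ[K]) :
    a ⊗ₜ[K] q = 1 ↔ a = 1 ∧ q = 1 ∨ a = -1 ∧ q = -1 := by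
  constructor
  · intro h
    obtain ⟨r, rfl, rfl⟩ := Algebra.TensorProduct.exists_eq_algebraMap_of_tmul_eq_one h
    rw [Quaternion.algebraMap_def, Quaternion.coe_mem_unitary_iff] at hq
    rcases hq with rfl | rfl <;> simp
  · rintro (⟨rfl, rfl⟩ | ⟨rfl, rfl⟩)
    · rfl
    · rw [TensorProduct.neg_tmul, TensorProduct.tmul_neg, neg_neg]
      rfl

theorem CliffordAlgebra.ι_mul_ι_neg {R M : Type*} [CommRing R] [AddCommGroup M] [Module R M]
    (Q : QuadraticForm R M) (m : M) : ι Q m * ι Q (-m) = -algebraMap R _ (Q m) := by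
  rw [map_neg, mul_neg, ι_sq_scalar]

theorem Qeuc_single {n : ℕ} (i : Fin n) : Qeuc n (Pi.single i 1) = 1 := by
  simp [Qeuc, QuadraticMap.weightedSumSquares_apply, Pi.single_apply]

theorem neg_one_mem_spinG {n : ℕ} (i : Fin n) : -1 ∈ SpinG n := by
  refine Subgroup.subset_closure ⟨Pi.single i 1, -Pi.single i 1, Qeuc_single i, ?_, ?_⟩
  · rw [QuadraticMap.map_neg, Qeuc_single]
  · rw [CliffordAlgebra.ι_mul_ι_neg, Qeuc_single, map_one, Units.val_neg, Units.val_one]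

def spinTensorHom (n : ℕ) : SpinG n × unitary ℍ[ℝ] →* CliffordAlgebra (Qeuc n) ⊗[ℝ] ℍ[ℝ] :=
  (Algebra.TensorProduct.tmulMonoidHom ℝ _ _).comp
    (((Units.coeHom _).comp (SpinG n).subtype).prodMap (unitary ℍ[ℝ]).subtype)

theorem spinTensorHom_apply {n : ℕ} (p : SpinG n × unitary ℍ[ℝ]) :
    spinTensorHom n p =
      ((p.1 : (CliffordAlgebra (Qeuc n))ˣ) : CliffordAlgebra (Qeuc n)) ⊗ₜ[ℝ] (p.2 : ℍ[ℝ]) :=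
  rfl

theorem spinTensorHom_eq_one_iff {n : ℕ} (p : SpinG n × unitary ℍ[ℝ]) :
    spinTensorHom n p = 1 ↔
      p = 1 ∨ ((p.1 : (CliffordAlgebra (Qeuc n))ˣ) = -1 ∧ (p.2 : ℍ[ℝ]) = -1) := by
  rw [spinTensorHom_apply, tmul_eq_one_iff_of_mem_unitary p.2.2]
  simp only [Prod.ext_iff, Prod.fst_one, Prod.snd_one, Subtype.ext_iff, OneMemClass.coe_one,
    Units.ext_iff, Units.val_one, Units.val_neg]

theorem ker_spinTensorHom_toHomUnits (n : ℕ) : (spinTensorHom n).toHomUnits.ker = ZSpin n := by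
  refine le_antisymm (fun p hp => ?_) ((Subgroup.closure_le _).mpr fun p hp => ?_)
  · rcases (spinTensorHom_eq_one_iff p).mp (congrArg Units.val hp) with rfl | hp
    · exact one_mem _
    · exact Subgroup.subset_closure hp
  · exact Units.ext ((spinTensorHom_eq_one_iff p).mpr (Or.inr hp))

/-- `Spinₙ` contains `−1`, and the map `Spinₙ × Sp(1) → Cl(Qₙ) ⊗ ℍ`, `(g, λ) ↦ g ⊗ λ`, is a
group homomorphism (into the multiplicative monoid, landing in the units) whose kernel is
exactly `{(1,1), (−1,−1)}`; in particular it induces an injective group homomorphism from the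
quotient `(Spinₙ × Sp(1))/⟨(−1,−1)⟩` into the unit group of `Cl(Qₙ) ⊗ ℍ`. -/
theorem spin_mul_sp1_embeds_in_clifford_tensor_quaternions (n : ℕ) (hn : 1 ≤ n) :
    ((-1 : (CliffordAlgebra (Qeuc n))ˣ) ∈ SpinG n) ∧
    ∃ F : (↥(SpinG n) × ↥(unitary ℍ[ℝ])) →* (CliffordAlgebra (Qeuc n) ⊗[ℝ] ℍ[ℝ]),
      (∀ p : ↥(SpinG n) × ↥(unitary ℍ[ℝ]),
        F p = (((p.1 : (CliffordAlgebra (Qeuc n))ˣ) : CliffordAlgebra (Qeuc n)) ⊗ₜ[ℝ]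
          ((p.2 : ℍ[ℝ]) : ℍ[ℝ]))) ∧
      (∀ p : ↥(SpinG n) × ↥(unitary ℍ[ℝ]),
        F p = 1 ↔ p = 1 ∨
          (((p.1 : (CliffordAlgebra (Qeuc n))ˣ) = -1) ∧ ((p.2 : ℍ[ℝ]) = -1))) ∧
      ∃ G : ((↥(SpinG n) × ↥(unitary ℍ[ℝ])) ⧸ ZSpin n) →*
          (CliffordAlgebra (Qeuc n) ⊗[ℝ] ℍ[ℝ])ˣ,
        Function.Injective G ∧
        ∀ p : ↥(SpinG n) × ↥(unitary ℍ[ℝ]),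
          ((G (QuotientGroup.mk p) : (CliffordAlgebra (Qeuc n) ⊗[ℝ] ℍ[ℝ])ˣ) :
            CliffordAlgebra (Qeuc n) ⊗[ℝ] ℍ[ℝ]) = F p := by
  refine ⟨neg_one_mem_spinG ⟨0, hn⟩, spinTensorHom n, spinTensorHom_apply,
    spinTensorHom_eq_one_iff, ?_⟩
  have hker := ker_spinTensorHom_toHomUnits n
  exact ⟨QuotientGroup.lift _ _ hker.ge, (QuotientGroup.injective_lift_iff _ _ _).mpr hker.symm,
    fun p => congrArg Units.val (QuotientGroup.lift_mk _ _ p)⟩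

end
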